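/- Let G and H be groups, let a ≥ 1 be an integer, and let γ be an automorphism of H with γ ∘ γ = id and γ ≠ id. Then the automorphism φ of G^{2a} × H^{a} defined by φ(g₀, …, g_{2a−1}; h₀, …, h_{a−1}) = (g₁, g₂, …, g_{2a−1}, g₀; h₁, h₂, …, h_{a−1}, γ(h₀)) has order exactly 2a in the automorphism group of G^{2a} × H^{a}. -/

import Mathlib

/-- The cyclic shift (to the left) automorphism of the direct power `G^a`,
realized as the group of functions `Fin a → G`. -/
def cyclicShift (G : Type*) [Group G] (a : ℕ) : MulAut (Fin a → G) where
  toFun g := fun i => g (finRotate a i)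
  invFun g := fun i => g ((finRotate a).symm i)
  left_inv g := by funext i; simp only [Equiv.apply_symm_apply, Equiv.symm_apply_apply]
  right_inv g := by funext i; simp only [Equiv.apply_symm_apply, Equiv.symm_apply_apply]
  map_mul' g h := rfl

/-- The automorphism of `H^a` applying `γ` to the coordinate `0` and keeping
the other coordinates unchanged. -/
def applyAtZero (H : Type*) [Group H] (a : ℕ) (ha : a ≠ 0) (γ : MulAut H) :
    MulAut (Fin a → H) :=
  haveI : NeZero a := ⟨ha⟩
  MulEquiv.piCongrRight (fun i : Fin a => if i = 0 then (γ : H ≃* H) else MulEquiv.refl H)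

/-- The automorphism `φ` of `G^{2a} × H^{a}` given by
`φ(g₀, …, g_{2a−1}; h₀, …, h_{a−1}) = (g₁, …, g_{2a−1}, g₀; h₁, …, h_{a−1}, γ(h₀))`:
it cyclically shifts the `G`-coordinates, and cyclically shifts the `H`-coordinates
applying `γ` to the coordinate that wraps around. -/
def twistAut (G H : Type*) [Group G] [Group H] (a : ℕ) (ha : a ≠ 0) (γ : MulAut H) :
    MulAut ((Fin (2 * a) → G) × (Fin a → H)) :=
  MulEquiv.prodCongr (cyclicShift G (2 * a)) (cyclicShift H a * applyAtZero H a ha γ)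

open Fin.NatCast

section Aux

variable {G H : Type*} [Group G] [Group H] {a : ℕ}

private lemma finRotate_eq_add_one [NeZero a] (i : Fin a) : finRotate a i = i + 1 := by
  obtain ⟨m, rfl⟩ := Nat.exists_eq_succ_of_ne_zero (NeZero.ne a)
  exact finRotate_succ_apply i

private lemma fin_add_natCast_val [NeZero a] (i : Fin a) (k : ℕ) :
    (i + (k : Fin a)).val = (i.val + k) % a := by
  rw [Fin.add_def, Fin.val_natCast]
  exact Nat.add_mod_mod _ _ _

private lemma cyclicShift_pow_apply [NeZero a] (n : ℕ) (g : Fin a → G) (i : Fin a) :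
    ((cyclicShift G a ^ n) g) i = g (i + (n : Fin a)) := by
  induction n generalizing g with
  | zero => simp
  | succ n ih =>
    have h1 : ((cyclicShift G a ^ (n + 1)) g) i
        = ((cyclicShift G a ^ n) ((cyclicShift G a) g)) i := by
      rw [pow_succ]; rfl
    rw [h1, ih]
    have h2 : ((cyclicShift G a) g) (i + (n : Fin a)) = g (i + (n : Fin a) + 1) := by
      show g (finRotate a _) = _
      rw [finRotate_eq_add_one]
    rw [h2]
    congr 1
    push_cast
    abel

private lemma psi_apply [NeZero a] (ha : a ≠ 0) (γ : MulAut H) (h : Fin a → H) (i : Fin a) :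
    (cyclicShift H a * applyAtZero H a ha γ) h i
      = (if i + 1 = 0 then (γ : H → H) else id) (h (i + 1)) := by
  show (applyAtZero H a ha γ h) (finRotate a i) = _
  rw [finRotate_eq_add_one]
  show (if i + 1 = 0 then (γ : H ≃* H) else MulEquiv.refl H) (h (i + 1)) = _
  split <;> rfl

private lemma psi_pow [NeZero a] (ha : a ≠ 0) (γ : MulAut H) (n : ℕ) (h : Fin a → H)
    (i : Fin a) :
    ((cyclicShift H a * applyAtZero H a ha γ) ^ n) h i
      = (γ ^ ((i.val + n) / a)) (h (i + (n : Fin a))) := by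
  induction n generalizing h with
  | zero => simp [Nat.div_eq_of_lt i.isLt]
  | succ n ih =>
    set ψ := cyclicShift H a * applyAtZero H a ha γ with hψ
    have h1 : ((ψ ^ (n + 1)) h) i = ((ψ ^ n) (ψ h)) i := by rw [pow_succ]; rfl
    rw [h1, ih]
    have h2 : (ψ h) (i + (n : Fin a))
        = (if i + (n : Fin a) + 1 = 0 then (γ : H → H) else id) (h (i + (n : Fin a) + 1)) :=
      psi_apply ha γ h _
    have hidx : i + (n : Fin a) + 1 = i + ((n + 1 : ℕ) : Fin a) := by push_cast; abel
    have hcond : (i + (n : Fin a) + 1 = 0) ↔ a ∣ (i.val + (n + 1)) := by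
      rw [hidx, Fin.ext_iff, fin_add_natCast_val, Fin.val_zero]
      exact Nat.dvd_iff_mod_eq_zero.symm
    have hsucc : (i.val + (n + 1)) / a
        = (i.val + n) / a + if a ∣ (i.val + n + 1) then 1 else 0 := by
      rw [← Nat.add_assoc, Nat.succ_div]
    rw [h2]
    by_cases hc : a ∣ (i.val + (n + 1))
    · rw [if_pos (hcond.mpr hc), hsucc, if_pos (by rwa [← Nat.add_assoc] at hc)]
      rw [pow_succ, MulAut.mul_apply]
      congr 1
      rw [hidx]
    · rw [if_neg (fun hh => hc (hcond.mp hh)), hsucc,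
        if_neg (fun hh => hc (by rwa [Nat.add_assoc] at hh))]
      simp only [Nat.add_zero, id_eq]
      rw [hidx]

private lemma twistAut_pow (ha : a ≠ 0) (γ : MulAut H) (n : ℕ)
    (p : (Fin (2 * a) → G) × (Fin a → H)) :
    (twistAut G H a ha γ ^ n) p
      = ((cyclicShift G (2 * a) ^ n) p.1,
          ((cyclicShift H a * applyAtZero H a ha γ) ^ n) p.2) := by
  induction n generalizing p with
  | zero => simp
  | succ n ih =>
    have h1 : (twistAut G H a ha γ ^ (n + 1)) p
        = (twistAut G H a ha γ ^ n) (twistAut G H a ha γ p) := by rw [pow_succ]; rfl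
    rw [h1, ih]
    have h2 : (twistAut G H a ha γ p).1 = (cyclicShift G (2 * a)) p.1 := rfl
    have h3 : (twistAut G H a ha γ p).2 = (cyclicShift H a * applyAtZero H a ha γ) p.2 := rfl
    rw [h2, h3, pow_succ, pow_succ]
    rfl

end Aux

/-- If `a ≥ 1` and `γ` is an automorphism of `H` with `γ ∘ γ = id` and `γ ≠ id`,
then the twisted cyclic shift automorphism `φ` of `G^{2a} × H^{a}` has order
exactly `2a` in the automorphism group of `G^{2a} × H^{a}`. -/
theorem orderOf_twistAut (G H : Type*) [Group G] [Group H] (a : ℕ) (ha : 1 ≤ a)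
    (γ : MulAut H) (hγ2 : γ * γ = 1) (hγ1 : γ ≠ 1) :
    orderOf (twistAut G H a (by omega) γ) = 2 * a := by
  haveI : NeZero a := ⟨by omega⟩
  haveI : NeZero (2 * a) := ⟨by omega⟩
  have ha0 : a ≠ 0 := by omega
  set φ := twistAut G H a (by omega : a ≠ 0) γ with hφ
  obtain ⟨x, hx⟩ : ∃ x : H, γ x ≠ x := by
    by_contra hc
    push_neg at hc
    exact hγ1 (MulEquiv.ext hc)
  have hx1 : x ≠ 1 := fun hh => hx (by simp [hh])
  have hγsq : γ ^ 2 = 1 := by rw [pow_two]; exact hγ2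
  -- φ ^ (2a) = 1
  have key2a : φ ^ (2 * a) = 1 := by
    have h1 : ∀ p : (Fin (2 * a) → G) × (Fin a → H), (φ ^ (2 * a)) p = p := by
      intro p
      rw [twistAut_pow]
      have hg : (cyclicShift G (2 * a) ^ (2 * a)) p.1 = p.1 := by
        funext i
        rw [cyclicShift_pow_apply]
        simp [Fin.natCast_self]
      have hh : ((cyclicShift H a * applyAtZero H a ha0 γ) ^ (2 * a)) p.2 = p.2 := by
        funext i
        rw [psi_pow]
        have hdiv : (i.val + 2 * a) / a = 2 := by
          rw [mul_comm, Nat.add_mul_div_left _ _ (by omega : 0 < a),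
            Nat.div_eq_of_lt i.isLt]
        have hcast : ((2 * a : ℕ) : Fin a) = 0 := Fin.natCast_eq_zero.mpr (dvd_mul_left a 2)
        rw [hdiv, hγsq, hcast, add_zero]
        rfl
      exact Prod.ext hg hh
    exact DFunLike.ext _ _ h1
  have hfin : IsOfFinOrder φ :=
    isOfFinOrder_iff_pow_eq_one.mpr ⟨2 * a, by omega, key2a⟩
  have hdvd : orderOf φ ∣ 2 * a := orderOf_dvd_of_pow_eq_one key2a
  -- a divides the order
  have hadvd : a ∣ orderOf φ := by
    by_contra hnd
    set d := orderOf φ with hd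
    have hpow : φ ^ d = 1 := pow_orderOf_eq_one φ
    set h0 : Fin a → H := fun j => if j = 0 then x else (1 : H) with hh0
    have hp : (φ ^ d) (1, h0) = (1, h0) := by rw [hpow]; rfl
    have hsnd : ((cyclicShift H a * applyAtZero H a ha0 γ) ^ d) h0 = h0 :=
      congrArg Prod.snd ((twistAut_pow ha0 γ d (1, h0)).symm.trans hp)
    have hdne : ((d : ℕ) : Fin a) ≠ 0 := fun hh => hnd (Fin.natCast_eq_zero.mp hh)
    have hieval := congrFun hsnd (-(d : Fin a))
    rw [psi_pow] at hieval
    rw [neg_add_cancel] at hieval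
    have hne0 : (-(d : Fin a)) ≠ 0 := by
      intro hh
      exact hdne (by rwa [neg_eq_zero] at hh)
    rw [show h0 (0 : Fin a) = x from if_pos rfl,
      show h0 (-(d : Fin a)) = 1 from if_neg hne0] at hieval
    have : x = 1 := by
      have := hieval
      rwa [MulEquiv.map_eq_one_iff] at this
    exact hx1 this
  -- order ≠ a
  have hne_a : orderOf φ ≠ a := by
    intro hh
    have hpow : φ ^ a = 1 := by
      have h2 := pow_orderOf_eq_one φ
      rwa [hh] at h2
    have hp : (φ ^ a) (1, fun _ => x) = (1, fun _ => x) := by rw [hpow]; rfl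
    have hsnd : ((cyclicShift H a * applyAtZero H a ha0 γ) ^ a) (fun _ => x)
        = (fun _ => x) :=
      congrArg Prod.snd ((twistAut_pow ha0 γ a (1, fun _ => x)).symm.trans hp)
    have hieval := congrFun hsnd (0 : Fin a)
    rw [psi_pow] at hieval
    simp only [Fin.val_zero, Nat.zero_add, Nat.div_self (by omega : 0 < a), pow_one] at hieval
    exact hx hieval
  -- conclude
  obtain ⟨k, hk⟩ := hadvd
  have hk2 : k ∣ 2 := by
    have : a * k ∣ a * 2 := by rw [← hk, mul_comm a 2]; exact hdvd
    exact (mul_dvd_mul_iff_left (by omega : a ≠ 0)).mp this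
  rcases (Nat.dvd_prime Nat.prime_two).mp hk2 with rfl | rfl
  · omega
  · rw [hk]; ring
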